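/- arXiv:2010.16222 — 2 statements merged into one kernel-verified Lean document; each statement's English description precedes it below -/
import Mathlib

section
/- If λ is a one-loop fixed point on ℝ^N, then (N+2)(N+16)‖λ‖² ≥ 3 a₀(λ) (2N + 4 − a₀(λ)). -/
/-- A quartic coupling on `ℝ^N`: a rank-4 tensor invariant under all
permutations of its four indices. -/
def IsSym4 {N : ℕ} (A : (Fin 4 → Fin N) → ℝ) : Prop :=
  ∀ (σ : Equiv.Perm (Fin 4)) (f : Fin 4 → Fin N), A (f ∘ σ) = A f

/-- The one-loop fixed point equation
`λ_{ijkl} = ∑_{m,n} (λ_{ijmn}λ_{klmn} + λ_{ikmn}λ_{jlmn} + λ_{ilmn}λ_{jkmn})`. -/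
def IsFixedPoint {N : ℕ} (A : (Fin 4 → Fin N) → ℝ) : Prop :=
  ∀ i j k l : Fin N, A ![i, j, k, l] =
    ∑ m : Fin N, ∑ n : Fin N,
      (A ![i, j, m, n] * A ![k, l, m, n] + A ![i, k, m, n] * A ![j, l, m, n]
        + A ![i, l, m, n] * A ![j, k, m, n])

/-- `‖λ‖² = ∑_{i,j,k,l} λ_{ijkl}²`. -/
def sqnorm {N : ℕ} (A : (Fin 4 → Fin N) → ℝ) : ℝ :=
  ∑ i : Fin N, ∑ j : Fin N, ∑ k : Fin N, ∑ l : Fin N, (A ![i, j, k, l]) ^ 2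

/-- `a₀(λ) = ∑_{i,j} λ_{iijj}`. -/
def a0 {N : ℕ} (A : (Fin 4 → Fin N) → ℝ) : ℝ :=
  ∑ i : Fin N, ∑ j : Fin N, A ![i, i, j, j]

/-- `t_{ij}(λ) = ∑_k λ_{ijkk}`. -/
def tmat {N : ℕ} (A : (Fin 4 → Fin N) → ℝ) (i j : Fin N) : ℝ :=
  ∑ k : Fin N, A ![i, j, k, k]

/-!
Contracting the fixed-point equation with `δ_ij δ_kl` gives `a₀ = ‖t‖² + 2‖λ‖²`, where
`t_ij = ∑_k λ_ijkk`. For a symmetric matrix `h`, the tensor `Q_h = symmProd h 1`, six times the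
symmetrisation of `h ⊗ δ`, is itself fully symmetric; hence `⟨λ, Q_h⟩ = 6⟨t, h⟩`, and, taking
`λ = Q_h`, `‖Q_h‖² = 6((N + 4)‖h‖² + (tr h)²)`. Expanding `0 ≤ ‖cλ - Q_h‖²` with
`c = (N + 2)(N + 4)` and `h = (N + 2)t - (a₀/2)δ`, which makes `Q_h / c` the projection of `λ` onto
the tensors of this form, and eliminating `‖t‖²` by the trace identity gives the bound.
-/

open Finset Equiv

theorem Fintype.sum_fun_fin_succ {α M : Type*} [Fintype α] [AddCommMonoid M] {n : ℕ}
    (F : (Fin (n + 1) → α) → M) : ∑ f, F f = ∑ a, ∑ f : Fin n → α, F (Fin.cons a f) := by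
  rw [← (Fin.consEquiv fun _ => α).sum_comp, Fintype.sum_prod_type]
  rfl

theorem Fintype.sum_fun_fin_four {α M : Type*} [Fintype α] [AddCommMonoid M]
    (F : (Fin 4 → α) → M) : ∑ f, F f = ∑ i, ∑ j, ∑ k, ∑ l, F ![i, j, k, l] := by
  simp only [Fintype.sum_fun_fin_succ, Fintype.sum_subsingleton _ ![]]
  rfl

theorem sum_fin_four_comp_perm {α M : Type*} [Fintype α] [AddCommMonoid M]
    (F : (Fin 4 → α) → M) (σ : Perm (Fin 4)) :
    ∑ i, ∑ j, ∑ k, ∑ l, F (![i, j, k, l] ∘ σ) = ∑ i, ∑ j, ∑ k, ∑ l, F ![i, j, k, l] := by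
  rw [← Fintype.sum_fun_fin_four (fun f => F (f ∘ σ)), ← Fintype.sum_fun_fin_four]
  exact (Equiv.arrowCongr σ.symm (Equiv.refl α)).sum_comp F

section

variable {N : ℕ} {A : (Fin 4 → Fin N) → ℝ}

theorem IsSym4.of_swaps {B : (Fin 4 → Fin N) → ℝ}
    (h01 : ∀ i j k l, B ![j, i, k, l] = B ![i, j, k, l])
    (h12 : ∀ i j k l, B ![i, k, j, l] = B ![i, j, k, l])
    (h23 : ∀ i j k l, B ![i, j, l, k] = B ![i, j, k, l]) : IsSym4 B := by
  let S : Submonoid (Perm (Fin 4)) :=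
    { carrier := {σ | ∀ f, B (f ∘ σ) = B f}
      one_mem' := fun _ => rfl
      mul_mem' := fun {σ} _ hσ hτ f => (hτ (f ∘ σ)).trans (hσ f) }
  have hgen : Set.range (fun i : Fin 3 => swap i.castSucc i.succ) ⊆ S := by
    rintro _ ⟨n, rfl⟩ f
    obtain ⟨i, j, k, l, rfl⟩ : ∃ i j k l, f = ![i, j, k, l] :=
      ⟨f 0, f 1, f 2, f 3, by funext x; fin_cases x <;> rfl⟩
    fin_cases n
    · refine (congrArg B ?_).trans (h01 i j k l); funext x; fin_cases x <;> rfl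
    · refine (congrArg B ?_).trans (h12 i j k l); funext x; fin_cases x <;> rfl
    · refine (congrArg B ?_).trans (h23 i j k l); funext x; fin_cases x <;> rfl
  intro σ
  exact Submonoid.closure_le.mpr hgen (Perm.mclosure_swap_castSucc_succ 3 ▸ Submonoid.mem_top σ)

theorem IsSym4.apply_eq_of_eq_comp (hA : IsSym4 A) (σ : Perm (Fin 4)) {f g : Fin 4 → Fin N}
    (h : ∀ x, g x = f (σ x)) : A g = A f :=
  (congrArg A (funext h)).trans (hA σ f)

theorem IsSym4.tmat_comm (hA : IsSym4 A) (i j : Fin N) : tmat A i j = tmat A j i :=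
  sum_congr rfl fun k _ => hA.apply_eq_of_eq_comp (swap 0 1) fun x => by fin_cases x <;> rfl

theorem IsSym4.sum_mul_comp_perm (hA : IsSym4 A) (P : (Fin 4 → Fin N) → ℝ) (σ : Perm (Fin 4)) :
    ∑ i, ∑ j, ∑ k, ∑ l, A ![i, j, k, l] * P (![i, j, k, l] ∘ σ) =
      ∑ i, ∑ j, ∑ k, ∑ l, A ![i, j, k, l] * P ![i, j, k, l] := by
  simpa only [hA σ] using sum_fin_four_comp_perm (fun f => A f * P f) σ

theorem IsFixedPoint.a0_eq (hA : IsSym4 A) (hfp : IsFixedPoint A) :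
    a0 A = ∑ i, ∑ j, tmat A i j ^ 2 + 2 * sqnorm A := by
  have hpair : ∀ i m n, A ![i, i, m, n] = A ![m, n, i, i] := fun i m n =>
    hA.apply_eq_of_eq_comp (swap 0 2 * swap 1 3) fun x => by fin_cases x <;> rfl
  calc a0 A = ∑ i, ∑ j, ∑ m, ∑ n, (A ![m, n, i, i] * A ![m, n, j, j] +
        A ![i, j, m, n] * A ![i, j, m, n] + A ![i, j, m, n] * A ![i, j, m, n]) := by
        refine sum_congr rfl fun i _ => sum_congr rfl fun j _ => ?_
        rw [hfp i i j j]
        refine sum_congr rfl fun m _ => sum_congr rfl fun n _ => ?_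
        rw [hpair i m n, hpair j m n]
    _ = ∑ i, ∑ j, tmat A i j ^ 2 + 2 * sqnorm A := by
        simp only [sum_add_distrib, sqnorm, sq, two_mul, ← add_assoc]
        congr 2
        simp only [tmat, sum_mul_sum]
        have h := sum_fin_four_comp_perm
          (fun f => A ![f 0, f 1, f 2, f 2] * A ![f 0, f 1, f 3, f 3]) (swap 0 2 * swap 1 3)
        simpa [Perm.mul_apply, swap_apply_def] using h

def symmProd (g h : Matrix (Fin N) (Fin N) ℝ) (f : Fin 4 → Fin N) : ℝ :=
  g (f 0) (f 1) * h (f 2) (f 3) + g (f 2) (f 3) * h (f 0) (f 1) +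
  g (f 0) (f 2) * h (f 1) (f 3) + g (f 1) (f 3) * h (f 0) (f 2) +
  g (f 0) (f 3) * h (f 1) (f 2) + g (f 1) (f 2) * h (f 0) (f 3)

@[simp]
theorem symmProd_vecCons (g h : Matrix (Fin N) (Fin N) ℝ) (i j k l : Fin N) :
    symmProd g h ![i, j, k, l] = g i j * h k l + g k l * h i j + g i k * h j l + g j l * h i k +
      g i l * h j k + g j k * h i l :=
  rfl

theorem isSym4_symmProd {g h : Matrix (Fin N) (Fin N) ℝ} (hg : g.IsSymm) (hh : h.IsSymm) :
    IsSym4 (symmProd g h) :=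
  IsSym4.of_swaps
    (fun i j k l => by simp only [symmProd_vecCons, hg.apply i j, hh.apply i j]; ring)
    (fun i j k l => by simp only [symmProd_vecCons, hg.apply j k, hh.apply j k]; ring)
    (fun i j k l => by simp only [symmProd_vecCons, hg.apply k l, hh.apply k l]; ring)

theorem IsSym4.sum_mul_symmProd (hA : IsSym4 A) (g h : Matrix (Fin N) (Fin N) ℝ) :
    ∑ i, ∑ j, ∑ k, ∑ l, A ![i, j, k, l] * symmProd g h ![i, j, k, l] =
      6 * ∑ i, ∑ j, ∑ k, ∑ l, A ![i, j, k, l] * (g i j * h k l) := by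
  set P : (Fin 4 → Fin N) → ℝ := fun f => g (f 0) (f 1) * h (f 2) (f 3)
  have hP : ∀ f, symmProd g h f = P f + P (f ∘ (swap 0 2 * swap 1 3 : Perm (Fin 4))) +
      P (f ∘ swap 1 2) + P (f ∘ (swap 1 2 * swap 0 2 * swap 1 3 : Perm (Fin 4))) +
      P (f ∘ (swap 1 3 * swap 2 3 : Perm (Fin 4))) + P (f ∘ (swap 0 1 * swap 1 2 : Perm (Fin 4))) :=
    fun f => rfl
  simp only [hP, mul_add, sum_add_distrib, hA.sum_mul_comp_perm]
  simp only [P, Matrix.cons_val]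
  ring

theorem sum_mul_mul_one (g : Matrix (Fin N) (Fin N) ℝ) :
    ∑ i, ∑ j, ∑ k, ∑ l, A ![i, j, k, l] * (g i j * (1 : Matrix (Fin N) (Fin N) ℝ) k l) =
      ∑ i, ∑ j, tmat A i j * g i j := by
  simp [Matrix.one_apply, tmat, sum_mul]

theorem tmat_symmProd_one {h : Matrix (Fin N) (Fin N) ℝ} (hh : h.IsSymm) (i j : Fin N) :
    tmat (symmProd h 1) i j = (N + 4) * h i j + h.trace * (1 : Matrix (Fin N) (Fin N) ℝ) i j := by
  simp only [tmat, symmProd_vecCons, Matrix.one_apply_eq, Matrix.one_apply, mul_one, mul_ite,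
    mul_zero, sum_add_distrib, sum_const, card_univ, Fintype.card_fin, nsmul_eq_mul, sum_ite_irrel,
    sum_ite_eq, mem_univ, if_true, hh.apply i j, Matrix.trace, Matrix.diag_apply]
  ring

theorem sum_symmProd_one_sq {h : Matrix (Fin N) (Fin N) ℝ} (hh : h.IsSymm) :
    ∑ i, ∑ j, ∑ k, ∑ l, symmProd h 1 ![i, j, k, l] ^ 2 =
      6 * ((N + 4) * ∑ i, ∑ j, h i j ^ 2 + h.trace ^ 2) := by
  simp only [pow_two, (isSym4_symmProd hh Matrix.isSymm_one).sum_mul_symmProd, sum_mul_mul_one,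
    tmat_symmProd_one hh]
  simp only [add_mul, sum_add_distrib, mul_assoc, ← mul_sum, Matrix.one_apply,
    boole_mul, sum_ite_eq, mem_univ, if_true, Matrix.trace, Matrix.diag_apply]

theorem IsSym4.sqnorm_lower (hA : IsSym4 A) (c : ℝ) {h : Matrix (Fin N) (Fin N) ℝ}
    (hh : h.IsSymm) :
    0 ≤ c ^ 2 * sqnorm A - 12 * c * ∑ i, ∑ j, tmat A i j * h i j +
      6 * ((N + 4) * ∑ i, ∑ j, h i j ^ 2 + h.trace ^ 2) :=
  calc 0 ≤ ∑ i, ∑ j, ∑ k, ∑ l, (c * A ![i, j, k, l] - symmProd h 1 ![i, j, k, l]) ^ 2 := by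
        positivity
    _ = c ^ 2 * sqnorm A -
          2 * c * ∑ i, ∑ j, ∑ k, ∑ l, A ![i, j, k, l] * symmProd h 1 ![i, j, k, l] +
        ∑ i, ∑ j, ∑ k, ∑ l, symmProd h 1 ![i, j, k, l] ^ 2 := by
        simp only [sqnorm, mul_sum, ← sum_sub_distrib, ← sum_add_distrib]
        refine sum_congr rfl fun i _ => sum_congr rfl fun j _ => sum_congr rfl fun k _ =>
          sum_congr rfl fun l _ => by ring
    _ = _ := by
        rw [hA.sum_mul_symmProd, sum_mul_mul_one, sum_symmProd_one_sq hh]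
        ring

theorem IsSym4.sqnorm_lower_tmat (hA : IsSym4 A) (c α β : ℝ) :
    0 ≤ c ^ 2 * sqnorm A - 12 * c * (α * ∑ i, ∑ j, tmat A i j ^ 2 + β * a0 A) +
      6 * ((N + 4) * (α ^ 2 * ∑ i, ∑ j, tmat A i j ^ 2 + 2 * α * β * a0 A + β ^ 2 * N) +
        (α * a0 A + β * N) ^ 2) := by
  set h : Matrix (Fin N) (Fin N) ℝ := α • Matrix.of (tmat A) + β • 1
  have hh : h.IsSymm :=
    ((Matrix.IsSymm.ext fun i j => hA.tmat_comm j i).smul α).add (Matrix.isSymm_one.smul β)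
  have h_apply : ∀ i j, h i j = α * tmat A i j + β * if i = j then 1 else 0 := fun i j => by
    simp only [h, Matrix.add_apply, Matrix.smul_apply, Matrix.of_apply, Matrix.one_apply,
      smul_eq_mul]
  have htr : ∑ i, tmat A i i = a0 A := rfl
  have hinner : ∑ i, ∑ j, tmat A i j * h i j = α * ∑ i, ∑ j, tmat A i j ^ 2 + β * a0 A := by
    simp only [h_apply, mul_add, mul_ite, mul_one, mul_zero, sum_add_distrib, sum_ite_eq, mem_univ,
      if_true, mul_left_comm _ α, ← sq, ← htr]
    simp only [← sum_mul, ← mul_sum]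
    ring
  have hnorm : ∑ i, ∑ j, h i j ^ 2 =
      α ^ 2 * ∑ i, ∑ j, tmat A i j ^ 2 + 2 * α * β * a0 A + β ^ 2 * N := by
    simp only [h_apply, add_sq, mul_pow, mul_ite, mul_one, mul_zero, ite_pow,
      zero_pow two_ne_zero, sum_add_distrib, sum_ite_eq, mem_univ, if_true, sum_const, card_univ,
      Fintype.card_fin, nsmul_eq_mul, ← htr]
    simp only [← sum_mul, ← mul_sum]
    ring
  have htrace : h.trace = α * a0 A + β * N := by
    simp only [Matrix.trace, Matrix.diag_apply, h_apply, if_true, mul_one, sum_add_distrib,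
      sum_const, card_univ, Fintype.card_fin, nsmul_eq_mul, ← htr, ← mul_sum]
    ring
  simpa only [hinner, hnorm, htrace] using hA.sqnorm_lower c hh

end

theorem fixedPoint_sqnorm_lower_general {N : ℕ}
    (A : (Fin 4 → Fin N) → ℝ) (hA : IsSym4 A) (hfp : IsFixedPoint A) :
    3 * a0 A * (2 * (N : ℝ) + 4 - a0 A) ≤
      ((N : ℝ) + 2) * ((N : ℝ) + 16) * sqnorm A := by
  have hsq := hA.sqnorm_lower_tmat ((N + 2) * (N + 4)) (N + 2) (-a0 A / 2)
  have htrace := hfp.a0_eq hA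
  have key : 0 ≤ ((N + 2) * (N + 4)) *
      ((N + 2) * (N + 16) * sqnorm A - 3 * a0 A * (2 * N + 4 - a0 A)) := by
    linear_combination hsq + 6 * ((N : ℝ) + 2) ^ 2 * (N + 4) * htrace
  exact sub_nonneg.mp (nonneg_of_mul_nonneg_right key (by positivity))

/-- at a one-loop fixed point,
`(N+2)(N+16)‖λ‖² ≥ 3 a₀(λ)(2N + 4 − a₀(λ))`. -/
theorem fixedPoint_sqnorm_lower {N : ℕ} (hN : 1 ≤ N)
    (A : (Fin 4 → Fin N) → ℝ) (hA : IsSym4 A) (hfp : IsFixedPoint A) :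
    3 * a0 A * (2 * (N : ℝ) + 4 - a0 A) ≤
      ((N : ℝ) + 2) * ((N : ℝ) + 16) * sqnorm A :=
  fixedPoint_sqnorm_lower_general A hA hfp
end

section
/- If g is a complex one-loop fixed point on ℂ^N, then for every vector φ ∈ ℂ^N the quantity V(φ) = ∑_{i,j,k,l} g_{ijkl} · conj(φ_i) · conj(φ_j) · φ_k · φ_l is a nonnegative real number (its imaginary part vanishes and its real part is ≥ 0). -/
/-- `(g ♭ h)_{ijkl} = ∑_{m,n} g_{ijmn} h_{mnkl}`. -/
noncomputable def cflat {N : ℕ} (g h : Fin N → Fin N → Fin N → Fin N → ℂ) :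
    Fin N → Fin N → Fin N → Fin N → ℂ :=
  fun i j k l => ∑ m : Fin N, ∑ n : Fin N, g i j m n * h m n k l

/-- `(g ♯ h)_{ijkl} = ∑_{m,n} g_{imkn} h_{jnlm}`. -/
noncomputable def csharp {N : ℕ} (g h : Fin N → Fin N → Fin N → Fin N → ℂ) :
    Fin N → Fin N → Fin N → Fin N → ℂ :=
  fun i j k l => ∑ m : Fin N, ∑ n : Fin N, g i m k n * h j n l m

/-- `P(A)_{ijkl} = (A_{ijkl} + A_{jikl} + A_{ijlk} + A_{jilk})/4`. -/
noncomputable def cP {N : ℕ} (A : Fin N → Fin N → Fin N → Fin N → ℂ) :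
    Fin N → Fin N → Fin N → Fin N → ℂ :=
  fun i j k l => (A i j k l + A j i k l + A i j l k + A j i l k) / 4

/-- `‖g‖² = ∑_{i,j,k,l} |g_{ijkl}|²`. -/
noncomputable def csqnorm {N : ℕ} (g : Fin N → Fin N → Fin N → Fin N → ℂ) : ℝ :=
  ∑ i : Fin N, ∑ j : Fin N, ∑ k : Fin N, ∑ l : Fin N, ‖g i j k l‖ ^ 2

/-- A complex quartic coupling on `ℂ^N`: symmetric under `i ↔ j` and `k ↔ l`,
and satisfying the reality condition `conj g_{ijkl} = g_{klij}`. -/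
def IsCplxCoupling {N : ℕ} (g : Fin N → Fin N → Fin N → Fin N → ℂ) : Prop :=
  (∀ i j k l, g i j k l = g j i k l) ∧ (∀ i j k l, g i j k l = g i j l k) ∧
    (∀ i j k l, (starRingEnd ℂ) (g i j k l) = g k l i j)

/-- The complex one-loop fixed point equation `g = P(g ♭ g + 4 g ♯ g)`. -/
def IsCplxFixedPoint {N : ℕ} (g : Fin N → Fin N → Fin N → Fin N → ℂ) : Prop :=
  IsCplxCoupling g ∧
    ∀ i j k l, g i j k l =
      cP (fun a b c d => cflat g g a b c d + 4 * csharp g g a b c d) i j k l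


/-!
Contracting a tensor with `φ̄ ⊗ φ̄ ⊗ φ ⊗ φ` is blind to the symmetrizer `P`, so at a fixed point
`V_g(φ) = V_{g ♭ g}(φ) + 4 V_{g ♯ g}(φ)`. Read `g` as a matrix `G` with rows `(i, j)` and columns
`(k, l)`: the reality condition makes `G` Hermitian and `g ♭ g` is `G * G = Gᴴ * G`, so
`V_{g ♭ g}(φ) = ‖G (φ ⊗ φ)‖²`. Read `g` instead as the matrix `R` with rows `(i, k)` and columns
`(j, l)`, paired bilinearly with `w = φ̄ ⊗ φ`: then `V_{g ♯ g}(φ) = ∑ x_{mn} x_{nm}` for `x = w R`,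
and the reality condition gives `x_{nm} = conj x_{mn}`, so this is `∑ |x_{mn}|²`.
Both conclusions are packaged as `0 ≤ V` in the partial order of `ℂ`, where it means that `V` is
real and nonnegative.
-/

open Finset Matrix ComplexConjugate
open scoped ComplexOrder

section

variable {N : ℕ}

def quarticPotential (A : Fin N → Fin N → Fin N → Fin N → ℂ) (φ : Fin N → ℂ) : ℂ :=
  ∑ i, ∑ j, ∑ k, ∑ l, A i j k l * conj (φ i) * conj (φ j) * φ k * φ l

def pairMatrix (A : Fin N → Fin N → Fin N → Fin N → ℂ) :
    Matrix (Fin N × Fin N) (Fin N × Fin N) ℂ :=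
  of fun p q => A p.1 p.2 q.1 q.2

def realignedMatrix (A : Fin N → Fin N → Fin N → Fin N → ℂ) :
    Matrix (Fin N × Fin N) (Fin N × Fin N) ℂ :=
  of fun p q => A p.1 q.1 p.2 q.2

variable (A B : Fin N → Fin N → Fin N → Fin N → ℂ) (φ : Fin N → ℂ)

lemma quarticPotential_add :
    quarticPotential (fun i j k l => A i j k l + B i j k l) φ =
      quarticPotential A φ + quarticPotential B φ := by
  simp only [quarticPotential, add_mul, sum_add_distrib]

lemma quarticPotential_const_mul (c : ℂ) :
    quarticPotential (fun i j k l => c * A i j k l) φ = c * quarticPotential A φ := by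
  simp only [quarticPotential, mul_sum, mul_assoc]

lemma quarticPotential_swap_left :
    quarticPotential (fun i j k l => A j i k l) φ = quarticPotential A φ := by
  rw [quarticPotential, quarticPotential, sum_comm]
  exact sum_congr rfl fun j _ => sum_congr rfl fun i _ =>
    sum_congr rfl fun k _ => sum_congr rfl fun l _ => by ring

lemma quarticPotential_swap_right :
    quarticPotential (fun i j k l => A i j l k) φ = quarticPotential A φ := by
  refine sum_congr rfl fun i _ => sum_congr rfl fun j _ => ?_
  rw [sum_comm]
  exact sum_congr rfl fun l _ => sum_congr rfl fun k _ => by ring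

lemma quarticPotential_cP : quarticPotential (cP A) φ = quarticPotential A φ := by
  have h₁ := quarticPotential_swap_left A φ
  have h₂ := quarticPotential_swap_right A φ
  have h₃ := quarticPotential_swap_right (fun i j k l => A j i k l) φ
  simp only [quarticPotential, cP] at *
  simp only [add_div, add_mul, sum_add_distrib, div_mul_eq_mul_div, ← sum_div, h₁, h₂, h₃]
  ring

lemma quarticPotential_eq_pairMatrix :
    quarticPotential A φ = star (fun p : Fin N × Fin N => φ p.1 * φ p.2) ⬝ᵥ
      pairMatrix A *ᵥ fun p => φ p.1 * φ p.2 := by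
  simp only [quarticPotential, pairMatrix, dotProduct, mulVec, Fintype.sum_prod_type, of_apply,
    Pi.star_apply, star_mul', mul_sum]
  exact sum_congr rfl fun i _ => sum_congr rfl fun j _ =>
    sum_congr rfl fun k _ => sum_congr rfl fun l _ => by simp only [Complex.star_def]; ring

lemma quarticPotential_eq_realignedMatrix :
    quarticPotential A φ = (fun p : Fin N × Fin N => conj (φ p.1) * φ p.2) ⬝ᵥ
      realignedMatrix A *ᵥ fun p => conj (φ p.1) * φ p.2 := by
  simp only [quarticPotential, realignedMatrix, dotProduct, mulVec, Fintype.sum_prod_type,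
    of_apply, mul_sum]
  refine sum_congr rfl fun i _ => ?_
  rw [sum_comm]
  exact sum_congr rfl fun j _ => sum_congr rfl fun k _ => sum_congr rfl fun l _ => by ring

lemma pairMatrix_cflat : pairMatrix (cflat A B) = pairMatrix A * pairMatrix B := by
  ext p q
  simp only [pairMatrix, cflat, mul_apply, of_apply, Fintype.sum_prod_type]

lemma realignedMatrix_csharp :
    realignedMatrix (csharp A B) =
      realignedMatrix A * of fun p q => realignedMatrix B q p.swap := by
  ext p q
  simp only [realignedMatrix, csharp, mul_apply, of_apply, Fintype.sum_prod_type, Prod.swap]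

variable {A}

lemma isHermitian_pairMatrix (hA : ∀ i j k l, conj (A i j k l) = A k l i j) :
    (pairMatrix A).IsHermitian := by
  ext p q
  simp [pairMatrix, hA]

lemma vecMul_realignedMatrix_swap (hA : ∀ i j k l, conj (A i j k l) = A k l i j)
    (p : Fin N × Fin N) :
    ((fun p : Fin N × Fin N => conj (φ p.1) * φ p.2) ᵥ* realignedMatrix A) p.swap =
      conj (((fun p : Fin N × Fin N => conj (φ p.1) * φ p.2) ᵥ* realignedMatrix A) p) := by
  simp only [vecMul, dotProduct, realignedMatrix, Fintype.sum_prod_type, of_apply, map_sum,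
    map_mul, hA, Complex.conj_conj, Prod.fst_swap, Prod.snd_swap]
  rw [sum_comm]
  exact sum_congr rfl fun i _ => sum_congr rfl fun k _ => by ring

lemma quarticPotential_cflat_self_nonneg (hA : ∀ i j k l, conj (A i j k l) = A k l i j) :
    0 ≤ quarticPotential (cflat A A) φ := by
  have h := (posSemidef_conjTranspose_mul_self (pairMatrix A)).dotProduct_mulVec_nonneg
    fun p => φ p.1 * φ p.2
  rwa [(isHermitian_pairMatrix hA).eq, ← pairMatrix_cflat, ← quarticPotential_eq_pairMatrix] at h

lemma quarticPotential_csharp_self_nonneg (hA : ∀ i j k l, conj (A i j k l) = A k l i j) :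
    0 ≤ quarticPotential (csharp A A) φ := by
  set w : Fin N × Fin N → ℂ := fun p => conj (φ p.1) * φ p.2
  have hswap : (of fun p q => realignedMatrix A q p.swap) *ᵥ w = star (w ᵥ* realignedMatrix A) := by
    ext p
    rw [Pi.star_apply, Complex.star_def, ← vecMul_realignedMatrix_swap φ hA]
    exact sum_congr rfl fun q _ => mul_comm _ _
  rw [quarticPotential_eq_realignedMatrix, realignedMatrix_csharp, ← mulVec_mulVec,
    dotProduct_mulVec, hswap]
  exact dotProduct_self_star_nonneg _

end

theorem cplxFixedPoint_potential_nonneg_general {N : ℕ}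
    (g : Fin N → Fin N → Fin N → Fin N → ℂ) (hfp : IsCplxFixedPoint g)
    (φ : Fin N → ℂ) :
    (∑ i : Fin N, ∑ j : Fin N, ∑ k : Fin N, ∑ l : Fin N,
        g i j k l * (starRingEnd ℂ) (φ i) * (starRingEnd ℂ) (φ j)
          * φ k * φ l).im = 0 ∧
      0 ≤ (∑ i : Fin N, ∑ j : Fin N, ∑ k : Fin N, ∑ l : Fin N,
        g i j k l * (starRingEnd ℂ) (φ i) * (starRingEnd ℂ) (φ j)
          * φ k * φ l).re := by
  obtain ⟨⟨-, -, hg⟩, hfix⟩ := hfp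
  have hsplit : quarticPotential g φ =
      quarticPotential (cflat g g) φ + 4 * quarticPotential (csharp g g) φ := by
    conv_lhs => rw [show g = cP _ by ext i j k l; exact hfix i j k l]
    rw [quarticPotential_cP, quarticPotential_add, quarticPotential_const_mul]
  have hV : 0 ≤ quarticPotential g φ := hsplit ▸ add_nonneg
    (quarticPotential_cflat_self_nonneg φ hg)
    (mul_nonneg (by norm_num) (quarticPotential_csharp_self_nonneg φ hg))
  exact ⟨(Complex.nonneg_iff.1 hV).2.symm, (Complex.nonneg_iff.1 hV).1⟩

/-- at a complex one-loop fixed point, the potential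
`V(φ) = ∑ g_{ijkl} conj(φ_i) conj(φ_j) φ_k φ_l` is a nonnegative real number for
every `φ ∈ ℂ^N`. -/
theorem cplxFixedPoint_potential_nonneg {N : ℕ} (hN : 1 ≤ N)
    (g : Fin N → Fin N → Fin N → Fin N → ℂ) (hfp : IsCplxFixedPoint g)
    (φ : Fin N → ℂ) :
    (∑ i : Fin N, ∑ j : Fin N, ∑ k : Fin N, ∑ l : Fin N,
        g i j k l * (starRingEnd ℂ) (φ i) * (starRingEnd ℂ) (φ j)
          * φ k * φ l).im = 0 ∧
      0 ≤ (∑ i : Fin N, ∑ j : Fin N, ∑ k : Fin N, ∑ l : Fin N,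
        g i j k l * (starRingEnd ℂ) (φ i) * (starRingEnd ℂ) (φ j)
          * φ k * φ l).re :=
  cplxFixedPoint_potential_nonneg_general g hfp φ
end
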